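/- The space V_K admits the direct sum decomposition V_K = span{(x,y)} ⊕ {curl w : w ∈ W_K}; that is, every v ∈ V_K can be written as v = c·(x,y) + curl w with c ∈ ℝ and w ∈ W_K, the constant c is uniquely determined by v, and the only element of span{(x,y)} that is a curl of some w ∈ W_K is the zero vector field. -/

import Mathlib

/-!
Taking the divergence of `v = c • (x, y) + curl w` kills the curl (mixed partials commute) and
leaves the constant `2c`, so `c` is determined by `v`; in particular `c • (x, y)` is a curl only
for `c = 0`. For existence, the summands `curl φ` of `V_K` are already curls of elements of
`W_K`, and a pair `(p, q)` of affine polynomials is `c • (x, y) + curl ψ` with `c` half the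
divergence of `(p, q)` and `ψ` a polynomial of degree at most two.
-/

open MvPolynomial

/-- Membership in the shape function space `W_K = P₃ ⊕ span{x⁴, y⁴}`. -/
def memWK (w : MvPolynomial (Fin 2) ℝ) : Prop :=
  ∃ (p : MvPolynomial (Fin 2) ℝ) (c d : ℝ),
    p.totalDegree ≤ 3 ∧ w = p + C c * X 0 ^ 4 + C d * X 1 ^ 4

/-- Membership in the vector shape function space
`V_K = [P₁]² ⊕ span{curl x³, curl x²y, curl xy², curl y³, curl x⁴, curl y⁴}`,
where `curl φ = (∂φ/∂y, −∂φ/∂x)`. -/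
def memVK (v : MvPolynomial (Fin 2) ℝ × MvPolynomial (Fin 2) ℝ) : Prop :=
  ∃ (p q φ : MvPolynomial (Fin 2) ℝ) (c1 c2 c3 c4 c5 c6 : ℝ),
    p.totalDegree ≤ 1 ∧ q.totalDegree ≤ 1 ∧
    φ = C c1 * X 0 ^ 3 + C c2 * X 0 ^ 2 * X 1 + C c3 * X 0 * X 1 ^ 2 +
        C c4 * X 1 ^ 3 + C c5 * X 0 ^ 4 + C c6 * X 1 ^ 4 ∧
    v.1 = p + pderiv 1 φ ∧ v.2 = q - pderiv 0 φ

namespace MvPolynomial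

variable {R σ : Type*} [CommSemiring R]

theorem pderiv_pderiv_comm (i j : σ) (f : MvPolynomial σ R) :
    pderiv i (pderiv j f) = pderiv j (pderiv i f) := by
  classical
  induction f using MvPolynomial.induction_on with
  | C a => simp
  | add p q hp hq => simp [hp, hq]
  | mul_X p n ih =>
    simp only [pderiv_mul, pderiv_X, map_add, ih, Pi.single_apply]
    split_ifs <;> simp only [mul_one, mul_zero, map_zero, add_zero, Derivation.map_one_eq_zero]
    abel

theorem eq_C_add_sum_C_mul_X_of_totalDegree_le_one [Fintype σ] [DecidableEq σ]
    {p : MvPolynomial σ R} (hp : p.totalDegree ≤ 1) :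
    p = C (coeff 0 p) + ∑ i, C (coeff (Finsupp.single i 1) p) * X i := by
  ext m
  simp only [coeff_add, coeff_C, coeff_sum, coeff_C_mul, coeff_X, mul_ite, mul_one, mul_zero]
  rcases Nat.lt_or_ge 1 (m.sum fun _ n => n) with hm | hm
  · have hm0 : m ≠ 0 := by rintro rfl; simp at hm
    have hm1 : ∀ i, Finsupp.single i 1 ≠ m := by rintro i rfl; simp at hm
    simp [coeff_eq_zero_of_totalDegree_lt (hp.trans_lt hm), hm0.symm, hm1]
  rcases Nat.le_one_iff_eq_zero_or_eq_one.mp hm with hm | hm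
  · obtain rfl : m = 0 := by
      ext i; simpa [Finsupp.sum] using Finset.sum_eq_zero_iff.mp hm i
    simp
  · obtain ⟨a, rfl⟩ := (Finsupp.sum_eq_one_iff m).mp hm
    simp [Finsupp.single_left_inj, (Finsupp.single_ne_zero.mpr one_ne_zero).symm]

end MvPolynomial

section Plane

variable {K : Type*} [Field K] [CharZero K]

theorem eq_of_C_mul_X_add_curl_eq {c c' : K} {w w' : MvPolynomial (Fin 2) K}
    (h₁ : C c * X 0 + pderiv 1 w = C c' * X 0 + pderiv 1 w')
    (h₂ : C c * X 1 - pderiv 0 w = C c' * X 1 - pderiv 0 w') : c = c' := by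
  have div₁ := congrArg (pderiv 0) h₁
  have div₂ := congrArg (pderiv 1) h₂
  simp only [map_add, map_sub, pderiv_C_mul, pderiv_X_self, mul_one] at div₁ div₂
  rw [pderiv_pderiv_comm 1 0 w, pderiv_pderiv_comm 1 0 w'] at div₂
  have h : C (c + c) = (C (c' + c') : MvPolynomial (Fin 2) K) := by
    simp only [map_add]
    linear_combination div₁ + div₂
  have hcc := C_injective (Fin 2) K h
  rwa [← two_mul, ← two_mul, mul_right_inj' two_ne_zero] at hcc

theorem exists_C_mul_X_add_curl_of_totalDegree_le_one {p q : MvPolynomial (Fin 2) K}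
    (hp : p.totalDegree ≤ 1) (hq : q.totalDegree ≤ 1) :
    ∃ (c : K) (ψ : MvPolynomial (Fin 2) K), ψ.totalDegree ≤ 2 ∧
      p = C c * X 0 + pderiv 1 ψ ∧ q = C c * X 1 - pderiv 0 ψ := by
  rw [eq_C_add_sum_C_mul_X_of_totalDegree_le_one hp, eq_C_add_sum_C_mul_X_of_totalDegree_le_one hq,
    Fin.sum_univ_two, Fin.sum_univ_two]
  set a₀ := coeff 0 p
  set a₁ := coeff (Finsupp.single 0 1) p
  set a₂ := coeff (Finsupp.single 1 1) p
  set b₀ := coeff 0 q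
  set b₁ := coeff (Finsupp.single 0 1) q
  set b₂ := coeff (Finsupp.single 1 1) q
  have hX (i : Fin 2) : (X i : MvPolynomial (Fin 2) K) ∈ restrictTotalDegree (Fin 2) K 2 :=
    (mem_restrictTotalDegree _ _ _).2 (by rw [totalDegree_X]; norm_num)
  have hXX (i j : Fin 2) : (X i * X j : MvPolynomial (Fin 2) K) ∈ restrictTotalDegree (Fin 2) K 2 :=
    (mem_restrictTotalDegree _ _ _).2 ((totalDegree_mul _ _).trans (by simp [totalDegree_X]))
  refine ⟨(a₁ + b₂) / 2, a₀ • X 1 - b₀ • X 0 + (a₂ / 2) • (X 1 * X 1) +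
    ((a₁ - b₂) / 2) • (X 0 * X 1) - (b₁ / 2) • (X 0 * X 0), ?_, ?_, ?_⟩
  · rw [← mem_restrictTotalDegree]
    apply_rules (transparency := .instances) [Submodule.add_mem, Submodule.sub_mem, Submodule.smul_mem]
  all_goals
    simp only [map_add, map_sub, Derivation.map_smul, pderiv_mul, pderiv_X_self,
      pderiv_X_of_ne (show (0 : Fin 2) ≠ 1 by decide),
      pderiv_X_of_ne (show (1 : Fin 2) ≠ 0 by decide), ← smul_eq_C_mul]
    simp only [C_eq_smul_one, one_mul, mul_one, zero_mul, mul_zero]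
    module

end Plane

/-- the direct sum decomposition
`V_K = span{(x,y)} ⊕ {curl w : w ∈ W_K}`: existence of the decomposition,
uniqueness of the coefficient of `(x,y)`, and triviality of the intersection. -/
theorem stmt3 :
    (∀ v : MvPolynomial (Fin 2) ℝ × MvPolynomial (Fin 2) ℝ, memVK v →
      ∃ (c : ℝ) (w : MvPolynomial (Fin 2) ℝ), memWK w ∧
        v.1 = C c * X 0 + pderiv 1 w ∧ v.2 = C c * X 1 - pderiv 0 w) ∧
    (∀ (c c' : ℝ) (w w' : MvPolynomial (Fin 2) ℝ), memWK w → memWK w' →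
      C c * X 0 + pderiv 1 w = C c' * X 0 + pderiv 1 w' →
      C c * X 1 - pderiv 0 w = C c' * X 1 - pderiv 0 w' →
      c = c') ∧
    (∀ (c : ℝ) (w : MvPolynomial (Fin 2) ℝ), memWK w →
      C c * X 0 = pderiv 1 w → C c * X 1 = -pderiv 0 w → c = 0) := by
  refine ⟨?_, fun c c' w w' _ _ h₁ h₂ => eq_of_C_mul_X_add_curl_eq h₁ h₂,
    fun c w _ h₁ h₂ => eq_of_C_mul_X_add_curl_eq (c' := 0) (w := 0) (by simpa using h₁) (by simpa using h₂)⟩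
  rintro v ⟨p, q, φ, c₁, c₂, c₃, c₄, c₅, c₆, hp, hq, hφ, hv₁, hv₂⟩
  obtain ⟨c, ψ, hψ, hpψ, hqψ⟩ := exists_C_mul_X_add_curl_of_totalDegree_le_one hp hq
  set cubic : MvPolynomial (Fin 2) ℝ :=
    C c₁ * X 0 ^ 3 + C c₂ * X 0 ^ 2 * X 1 + C c₃ * X 0 * X 1 ^ 2 + C c₄ * X 1 ^ 3
  have hcubic : cubic.IsHomogeneous 3 :=
    (((isHomogeneous_C_mul_X_pow c₁ 0 3).add
      ((isHomogeneous_C_mul_X_pow c₂ 0 2).mul (isHomogeneous_X ℝ 1))).add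
      ((isHomogeneous_C_mul_X c₃ 0).mul (isHomogeneous_X_pow 1 2))).add
      (isHomogeneous_C_mul_X_pow c₄ 1 3)
  refine ⟨c, ψ + φ, ⟨ψ + cubic, c₅, c₆, (totalDegree_add _ _).trans
    (max_le (hψ.trans (by norm_num)) hcubic.totalDegree_le), by rw [hφ]; ring⟩, ?_, ?_⟩
  · rw [hv₁, hpψ, map_add]; ring
  · rw [hv₂, hqψ, map_add]; ring
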